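/- Let B = [−1,1]×[−1,1] ⊂ ℝ² and define the 1-form ω(x,y) := (sin x + H(y)) dy, where H is the Heaviside function (H(y) = 0 for y < 0, H(y) = 1 for y ≥ 0). Then: (1) for every h = (h₁,h₂) with 0 < h_i < 2 and every x = (x₁,x₂) such that x + [0,h₁]×[0,h₂] ⊆ B, one has ∫_{∂(x+β_h)} ω = h₂ (sin(x₁+h₁) − sin x₁), where β_h = [0,h₁]×[0,h₂]; (2) consequently ω is flux-continuous on B; (3) ω is not continuous at any point (x₁, 0) ∈ B (its dy-coefficient has distinct one-sided limits there). -/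

import Mathlib

open scoped BigOperators
open BoxIntegral Set

noncomputable section

/-- Riemann integrability of `f` over the closed block `[a, b] ⊆ ℝ^k`. -/
def RiemannIntegrableOn {k : ℕ} (f : (Fin k → ℝ) → ℝ) (a b : Fin k → ℝ) : Prop :=
  ∃ h : ∀ i, a i < b i,
    BoxIntegral.Integrable ⟨a, b, h⟩ BoxIntegral.IntegrationParams.Riemann f
      BoxIntegral.BoxAdditiveMap.volume

/-- The Riemann integral of `f` over the closed block `[a, b] ⊆ ℝ^k` (junk value if
the block is degenerate or `f` is not integrable). -/
def riemannIntegral {k : ℕ} (f : (Fin k → ℝ) → ℝ) (a b : Fin k → ℝ) : ℝ :=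
  if h : ∀ i, a i < b i then
    BoxIntegral.integral ⟨a, b, h⟩ BoxIntegral.IntegrationParams.Riemann f
      BoxIntegral.BoxAdditiveMap.volume
  else 0

/-- The volume of the block `[a,b]`. -/
def blockVol {k : ℕ} (a b : Fin k → ℝ) : ℝ := ∏ i, (b i - a i)

/-- The length of the longest side of the block `[a,b]`. -/
def blockL {k : ℕ} (a b : Fin k → ℝ) : ℝ := ⨆ i, (b i - a i)

/-- The length of the shortest side of the block `[a,b]`. -/
def blockl {k : ℕ} (a b : Fin k → ℝ) : ℝ := ⨅ i, (b i - a i)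

/-- `k`-forms on (subsets of) `ℝ^n`, with no regularity assumed. -/
abbrev Form (n k : ℕ) := (Fin n → ℝ) → AlternatingMap ℝ (Fin n → ℝ) ℝ (Fin k)

/-- The `i`-th standard basis vector of `ℝ^n`. -/
def e {n : ℕ} (i : Fin n) : Fin n → ℝ := Pi.single i 1

/-- The integrand of a `k`-form `ω` on the face of a `(k+1)`-block obtained by freezing the
`i`-th coordinate at the value `c`; it is evaluated on the standard basis vectors
`(e_1, …, ê_i, …, e_{k+1})`. -/
def faceFun {k : ℕ} (ω : Form (k+1) k) (i : Fin (k+1)) (c : ℝ) : (Fin k → ℝ) → ℝ :=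
  fun t => ω (i.insertNth c t) fun l => e (i.succAbove l)

/-- The flux `∫_{∂B} ω` of the `k`-form `ω` through the boundary of the `(k+1)`-block
`[a,b]`, i.e. the alternating sum `∑_{i,j} (-1)^{i+j}` of the Riemann integrals of the
face restrictions of `ω`. -/
def boundaryIntegral {k : ℕ} (ω : Form (k+1) k) (a b : Fin (k+1) → ℝ) : ℝ :=
  ∑ i : Fin (k+1), (-1 : ℝ) ^ (i : ℕ) *
    (riemannIntegral (faceFun ω i (b i)) (a ∘ i.succAbove) (b ∘ i.succAbove)
      - riemannIntegral (faceFun ω i (a i)) (a ∘ i.succAbove) (b ∘ i.succAbove))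

/-- All the face integrals making up `∫_{∂B} ω` exist as Riemann integrals. -/
def BoundaryIntegrable {k : ℕ} (ω : Form (k+1) k) (a b : Fin (k+1) → ℝ) : Prop :=
  ∀ i : Fin (k+1), ∀ c ∈ ({a i, b i} : Set ℝ),
    RiemannIntegrableOn (faceFun ω i c) (a ∘ i.succAbove) (b ∘ i.succAbove)

/-- `ω` is flux-continuous on the `(k+1)`-block `[a,b]`: for every block
`β = [0,h₁]×…×[0,h_{k+1}]` with `0 < hᵢ < bᵢ - aᵢ`, the function `x ↦ ∫_{∂(x+β)} ω` is
continuous at every point `x` with `x + β ⊆ [a,b]`. -/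
def FluxContinuousOn {k : ℕ} (ω : Form (k+1) k) (a b : Fin (k+1) → ℝ) : Prop :=
  ∀ h : Fin (k+1) → ℝ, (∀ i, 0 < h i ∧ h i < b i - a i) →
    ∀ x ∈ {y : Fin (k+1) → ℝ | ∀ i, a i ≤ y i ∧ y i + h i ≤ b i},
      ContinuousWithinAt (fun y => boundaryIntegral ω y (fun i => y i + h i))
        {y : Fin (k+1) → ℝ | ∀ i, a i ≤ y i ∧ y i + h i ≤ b i} x

/-- The pullback of the `k`-form `ω` by the (differentiable) map `ψ`. -/
def pullback {p n k : ℕ} (ψ : (Fin p → ℝ) → (Fin n → ℝ)) (ω : Form n k) : Form p k :=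
  fun t => (ω (ψ t)).compLinearMap (fderiv ℝ ψ t : (Fin p → ℝ) →L[ℝ] (Fin n → ℝ)).toLinearMap

/-- `ω` is flux-integrable around `x ∈ U`: for every `C¹` map `φ : A → U` from an open
set `A ⊆ ℝ^{k+1}` with `φ p = x` and every `(k+1)`-block `B ⊆ A` with `p ∈ B`, the
pullback `φ*ω` is Riemann integrable over `∂B`. -/
def FluxIntegrableAround {n k : ℕ} (U : Set (Fin n → ℝ)) (ω : Form n k)
    (x : Fin n → ℝ) : Prop :=
  ∀ (A : Set (Fin (k+1) → ℝ)) (φ : (Fin (k+1) → ℝ) → (Fin n → ℝ)) (p : Fin (k+1) → ℝ),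
    IsOpen A → ContDiffOn ℝ 1 φ A → Set.MapsTo φ A U → p ∈ A → φ p = x →
    ∀ a b : Fin (k+1) → ℝ, (∀ i, a i < b i) → Set.Icc a b ⊆ A → p ∈ Set.Icc a b →
      BoundaryIntegrable (pullback φ ω) a b

/-- `ω` is derivable at `x ∈ U` in the infinitesimal-flux sense, with exterior derivative
`D ∈ Λ^{k+1}(ℝ^n)^*`. -/
def HasFluxDerivAt {n k : ℕ} (U : Set (Fin n → ℝ)) (ω : Form n k)
    (D : AlternatingMap ℝ (Fin n → ℝ) ℝ (Fin (k+1))) (x : Fin n → ℝ) : Prop :=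
  FluxIntegrableAround U ω x ∧
  ∀ (v : Fin (k+1) → (Fin n → ℝ))
    (A : Set (Fin (k+1) → ℝ)) (φ : (Fin (k+1) → ℝ) → (Fin n → ℝ)) (p : Fin (k+1) → ℝ),
    IsOpen A → ContDiffOn ℝ 1 φ A → Set.MapsTo φ A U → p ∈ A → φ p = x →
    (∀ i, fderiv ℝ φ p (e i) = v i) →
    ∀ ε > (0:ℝ), ∀ K > (1:ℝ), ∃ δ > (0:ℝ), ∀ a b : Fin (k+1) → ℝ,
      (∀ i, a i < b i) → Set.Icc a b ⊆ A → p ∈ Set.Icc a b →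
      blockL a b < δ → blockL a b / blockl a b < K →
      |D v - (1 / blockVol a b) * boundaryIntegral (pullback φ ω) a b| < ε


/-- The Heaviside step function. -/
def Heaviside (y : ℝ) : ℝ := if 0 ≤ y then 1 else 0

/-- The constant `1`-form `dy` on `ℝ²`. -/
def dy : AlternatingMap ℝ (Fin 2 → ℝ) ℝ (Fin 1) :=
  AlternatingMap.ofSubsingleton ℝ (Fin 2 → ℝ) ℝ (0 : Fin 1) (LinearMap.proj 1)

/-- The `1`-form `ω(x,y) = (sin x + H(y)) dy` on `B = [-1,1] × [-1,1]`. -/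
def heavisideForm : Form 2 1 :=
  fun p => (Real.sin (p 0) + Heaviside (p 1)) • dy

/-!
Since `dy` vanishes on `e₀`, only the two vertical faces of a block contribute to the flux of
`(f x + g y) dy`, and there the integrand is `f c + g t`, with `c` the abscissa of the face.
As soon as `g` is Riemann integrable its two integrals cancel, leaving `h₂ (f (x₁ + h₁) - f x₁)`,
which is continuous in the corner `x` when `f = sin`. The Heaviside function is Riemann integrable
by Lebesgue's criterion (it is bounded and continuous off a null hyperplane), yet along the
vertical line through `(x₁, 0)` the coefficient `sin x + H(y)` jumps by `1`.
-/

open Filter Topology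

lemma riemannIntegral_zero {k : ℕ} (a b : Fin k → ℝ) :
    riemannIntegral (fun _ => (0 : ℝ)) a b = 0 := by
  unfold riemannIntegral
  split_ifs
  exacts [integral_zero, rfl]

lemma riemannIntegral_const_add {k : ℕ} {g : (Fin k → ℝ) → ℝ} {a b : Fin k → ℝ}
    (hg : RiemannIntegrableOn g a b) (c : ℝ) :
    riemannIntegral (fun t => c + g t) a b = blockVol a b * c + riemannIntegral g a b := by
  obtain ⟨hab, hg⟩ := hg
  rw [riemannIntegral, riemannIntegral, dif_pos hab, dif_pos hab,
    show (fun t => c + g t) = (fun _ => c) + g from rfl, integral_add (integrable_const c) hg,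
    BoxIntegral.integral_const, BoxAdditiveMap.volume_apply, smul_eq_mul, blockVol]

lemma continuousAt_heaviside {y : ℝ} (hy : y ≠ 0) : ContinuousAt Heaviside y := by
  rcases hy.lt_or_gt with hy | hy
  · refine (continuousAt_const : ContinuousAt (fun _ => (0 : ℝ)) y).congr ?_
    filter_upwards [Iio_mem_nhds hy] with z hz
    exact (if_neg (not_le.2 hz)).symm
  · refine (continuousAt_const : ContinuousAt (fun _ => (1 : ℝ)) y).congr ?_
    filter_upwards [Ioi_mem_nhds hy] with z hz
    exact (if_pos hz.le).symm

lemma riemannIntegrableOn_heaviside_apply {k : ℕ} (i : Fin k) {a b : Fin k → ℝ}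
    (hab : ∀ j, a j < b j) : RiemannIntegrableOn (fun t => Heaviside (t i)) a b := by
  have hbdd : ∃ C : ℝ, ∀ t ∈ Box.Icc ⟨a, b, hab⟩, ‖Heaviside (t i)‖ ≤ C :=
    ⟨1, fun t _ => by unfold Heaviside; split_ifs <;> norm_num⟩
  have hnull : MeasureTheory.volume {t : Fin k → ℝ | t i = 0} = 0 :=
    MeasureTheory.Measure.pi_hyperplane _ i 0
  have hcont : ∀ᵐ t, ContinuousAt (fun t : Fin k → ℝ => Heaviside (t i)) t := by
    filter_upwards [MeasureTheory.measure_eq_zero_iff_ae_notMem.1 hnull] with t ht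
    exact ContinuousAt.comp (f := fun t : Fin k → ℝ => t i) (continuousAt_heaviside ht)
      (continuous_apply i).continuousAt
  exact ⟨hab, integrable_of_bounded_and_ae_continuous _ hbdd _ hcont⟩

lemma not_continuousWithinAt_heaviside {s : Set ℝ} (hs : s ∈ 𝓝[<] 0) :
    ¬ ContinuousWithinAt Heaviside s 0 := by
  intro hc
  have hleft : Tendsto Heaviside (𝓝[<] 0) (𝓝 0) :=
    tendsto_const_nhds.congr' <| eventually_nhdsWithin_of_forall fun y hy =>
      (if_neg (not_le.2 hy)).symm
  have hone : Heaviside 0 = 1 := if_pos le_rfl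
  have := tendsto_nhds_unique ((hc.mono_of_mem_nhdsWithin hs).tendsto) hleft
  norm_num [hone] at this

lemma faceFun_smul_dy_zero (A : (Fin 2 → ℝ) → ℝ) (c : ℝ) :
    faceFun (fun p => A p • dy) 0 c = fun t => A (Fin.cons c t) := by
  funext t
  simp [faceFun, dy, e, Fin.insertNth_zero']

lemma faceFun_smul_dy_one (A : (Fin 2 → ℝ) → ℝ) (c : ℝ) :
    faceFun (fun p => A p • dy) 1 c = fun _ => 0 := by
  funext t
  simp [faceFun, dy, e]

lemma boundaryIntegral_add_smul_dy (f g : ℝ → ℝ) {a b : Fin 2 → ℝ}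
    (hg : RiemannIntegrableOn (fun t : Fin 1 → ℝ => g (t 0)) (fun _ => a 1) (fun _ => b 1)) :
    boundaryIntegral (fun p => (f (p 0) + g (p 1)) • dy) a b
      = (b 1 - a 1) * (f (b 0) - f (a 0)) := by
  have hsucc : ∀ v : Fin 2 → ℝ, v ∘ Fin.succAbove 0 = fun _ => v 1 := fun v => by
    funext j; fin_cases j; rfl
  rw [boundaryIntegral, Fin.sum_univ_two]
  simp only [faceFun_smul_dy_zero, faceFun_smul_dy_one, riemannIntegral_zero, hsucc,
    Fin.cons_zero, Fin.cons_one]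
  rw [riemannIntegral_const_add hg, riemannIntegral_const_add hg]
  simp only [blockVol, Finset.univ_unique, Finset.prod_singleton, Fin.val_zero, pow_zero]
  ring

lemma boundaryIntegral_heavisideForm (x h : Fin 2 → ℝ) (h1 : 0 < h 1) :
    boundaryIntegral heavisideForm x (fun i => x i + h i)
      = h 1 * (Real.sin (x 0 + h 0) - Real.sin (x 0)) := by
  rw [show heavisideForm = fun p => (Real.sin (p 0) + Heaviside (p 1)) • dy from rfl,
    boundaryIntegral_add_smul_dy _ _
    (riemannIntegrableOn_heaviside_apply (0 : Fin 1) fun _ => lt_add_of_pos_right _ h1)]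
  ring_nf

lemma heavisideForm_apply_e_one (p : Fin 2 → ℝ) :
    heavisideForm p (fun _ => e 1) = Real.sin (p 0) + Heaviside (p 1) := by
  simp [heavisideForm, dy, e]

lemma heavisideForm_not_continuousWithinAt {x : Fin 2 → ℝ} (hx1 : x 1 = 0)
    (hx : x ∈ Icc (fun _ => (-1 : ℝ)) (fun _ => 1)) :
    ¬ ContinuousWithinAt (fun p => heavisideForm p fun _ : Fin 1 => e 1)
      (Icc (fun _ => (-1 : ℝ)) (fun _ => 1)) x := by
  intro hc
  set φ : ℝ → Fin 2 → ℝ := fun t => Function.update x 1 t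
  have hφ : φ 0 = x := by simp [φ, ← hx1]
  have hmaps : MapsTo φ (Icc (-1) 1) (Icc (fun _ => (-1 : ℝ)) (fun _ => 1)) := by
    intro t ht
    refine ⟨fun i => ?_, fun i => ?_⟩ <;> fin_cases i <;> simp [φ, hx.1 0, hx.2 0, ht.1, ht.2]
  have hslice : Heaviside = fun t => heavisideForm (φ t) (fun _ => e 1) - Real.sin (x 0) := by
    funext t
    simp [heavisideForm_apply_e_one, φ]
  have hH : ContinuousWithinAt Heaviside (Icc (-1) 1) 0 := by
    rw [hslice]
    exact ((hc.comp_of_eq (by fun_prop : Continuous φ).continuousWithinAt hmaps hφ).sub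
      continuousWithinAt_const)
  exact not_continuousWithinAt_heaviside (Icc_mem_nhdsLT_of_mem ⟨by norm_num, by norm_num⟩) hH

/-- On `B = [-1,1]²`, the form `ω = (sin x + H(y)) dy` (with `H` the Heaviside function)
satisfies: (1) for every admissible `β_h = [0,h₁]×[0,h₂]` and every `x` with `x + β_h ⊆ B`,
`∫_{∂(x+β_h)} ω = h₂ (sin(x₁+h₁) - sin x₁)`; (2) `ω` is flux-continuous on `B`; but
(3) `ω` is not continuous at any point `(x₁, 0) ∈ B` (its `dy`-coefficient has distinct
one-sided limits there). -/
theorem heaviside_flux_continuous_not_continuous :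
    (∀ h : Fin 2 → ℝ, (∀ i, 0 < h i ∧ h i < 2) →
      ∀ x : Fin 2 → ℝ, (∀ i, (-1:ℝ) ≤ x i ∧ x i + h i ≤ 1) →
        boundaryIntegral heavisideForm x (fun i => x i + h i)
          = h 1 * (Real.sin (x 0 + h 0) - Real.sin (x 0))) ∧
    FluxContinuousOn heavisideForm (fun _ => (-1:ℝ)) (fun _ => (1:ℝ)) ∧
    (∀ x : Fin 2 → ℝ, x 1 = 0 →
      x ∈ Set.Icc (fun _ => (-1:ℝ)) (fun _ => (1:ℝ)) →
      ¬ ContinuousWithinAt (fun p => heavisideForm p fun _ : Fin 1 => e 1)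
          (Set.Icc (fun _ => (-1:ℝ)) (fun _ => (1:ℝ))) x) := by
  refine ⟨fun h hh x _ => boundaryIntegral_heavisideForm x h (hh 1).1, ?_,
    fun x hx1 hx => heavisideForm_not_continuousWithinAt hx1 hx⟩
  intro h hh x _
  have hflux : Continuous fun y : Fin 2 → ℝ => h 1 * (Real.sin (y 0 + h 0) - Real.sin (y 0)) := by
    fun_prop
  exact hflux.continuousWithinAt.congr (fun y _ => boundaryIntegral_heavisideForm y h (hh 1).1)
    (boundaryIntegral_heavisideForm x h (hh 1).1)

end
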